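/- There exists a family of finite pointed sets G_{ij} (i, j ∈ ℕ) together with basepoint-preserving vertical bonding maps p_{ij} : G_{i+1,j} → G_{ij} and basepoint-preserving horizontal maps h_{ij} : G_{ij} → G_{i,j+1} satisfying h_{ij} ∘ p_{ij} = p_{i,j+1} ∘ h_{i+1,j} for all i, j, such that, setting Γ_j = lim_i G_{ij} (the pointed set of threads) with the maps Γ_j → Γ_{j+1} induced by the horizontal maps: (i) for every j and every γ ∈ Γ_j there exists k ≥ j such that the composite map Γ_j → Γ_k sends γ to the basepoint (i.e., colim_j Γ_j is trivial); but (ii) for every j and every k ≥ j the composite map Γ_j → Γ_k is not trivial (its image is not reduced to the basepoint). (Hence, for towers of pointed sets rather than groups, triviality of the colimit of the inverse limits does not imply that the bonding maps between the inverse limits are eventually trivial, even though towers of finite sets automatically satisfy the Mittag-Leffler condition.) -/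

import Mathlib

def hIterPt (G : ℕ → ℕ → Type) (h : ∀ i j, G i j → G i (j + 1)) (i j : ℕ) :
    ∀ k, G i j → G i (j + k)
  | 0 => id
  | k + 1 => fun g => h i (j + k) (hIterPt G h i j k g)

/-!
Let `G_{ij}` consist of a basepoint and the countdown clocks showing a value `n` with
`n + j ≤ i`; the bonding map forgets the clocks that are not allowed one level down, and the
horizontal map counts every clock down by one, a clock at `0` going off to the basepoint.
A thread in `Γ_j` is then either the basepoint or one clock value `n`, present from level
`n + j` on, so `Γ_j → Γ_{j+1}` is `n ↦ n - 1` on `ℕ ⊔ {*}` with `0 ↦ *`. Every thread reaches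
the basepoint after finitely many steps, yet the thread showing `k` survives `k` steps.
-/

namespace CountdownTower

def tick : Option ℕ → Option ℕ
  | some (n + 1) => some n
  | _ => none

lemma tick_eq_some_iff {m : Option ℕ} {n : ℕ} : tick m = some n ↔ m = some (n + 1) := by
  rcases m with _ | _ | m <;> simp [tick]

lemma tick_iterate_none (k : ℕ) : tick^[k] none = none :=
  Function.iterate_fixed rfl k

lemma tick_iterate_some_add (n k : ℕ) : tick^[k] (some (n + k)) = some n := by
  induction k generalizing n with
  | zero => rfl
  | succ k ih => rw [Function.iterate_succ_apply]; exact ih n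

lemma tick_iterate_self (n : ℕ) : tick^[n] (some n) = some 0 := by
  simpa using tick_iterate_some_add 0 n

lemma tick_iterate_some_of_lt {n k : ℕ} (h : n < k) : tick^[k] (some n) = none := by
  obtain ⟨d, rfl⟩ := Nat.exists_eq_add_of_lt h
  rw [add_right_comm, add_comm, Function.iterate_add_apply, Function.iterate_succ_apply',
    tick_iterate_self]
  exact tick_iterate_none d

lemma tick_filter (i j : ℕ) (m : Option ℕ) :
    tick (m.filter fun n => n + j ≤ i) = (tick m).filter fun n => n + (j + 1) ≤ i := by
  rcases m with _ | _ | n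
  · rfl
  · simp only [Option.filter_some]; split_ifs <;> rfl
  · simp only [Option.filter_some, decide_eq_true_eq, tick, Nat.add_right_comm n 1 j, add_assoc]
    split_ifs <;> rfl

def Clock (i j : ℕ) : Type := {m : Option ℕ // ∀ n ∈ m, n + j ≤ i}

lemma finite_clock (i j : ℕ) : Finite (Clock i j) := by
  refine Set.Finite.to_subtype (s := {m | ∀ n ∈ m, n + j ≤ i})
    (((Set.finite_Iic i).image some).insert none |>.subset ?_)
  rintro (_ | n) hn
  · exact Set.mem_insert _ _
  · exact Set.mem_insert_of_mem _ ⟨n, by have := hn n rfl; simp; omega, rfl⟩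

def base (i j : ℕ) : Clock i j := ⟨none, by simp⟩

def vert (i j : ℕ) (x : Clock (i + 1) j) : Clock i j :=
  ⟨x.1.filter fun n => n + j ≤ i, fun n hn => by simpa using (Option.mem_filter_iff.1 hn).2⟩

def horiz (i j : ℕ) (x : Clock i j) : Clock i (j + 1) :=
  ⟨tick x.1, fun n hn => by have := x.2 (n + 1) (tick_eq_some_iff.1 hn); omega⟩

lemma horiz_vert (i j : ℕ) (x : Clock (i + 1) j) :
    horiz i j (vert i j x) = vert i (j + 1) (horiz (i + 1) j x) :=
  Subtype.ext (tick_filter i j x.1)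

lemma hIterPt_val (i j k : ℕ) (x : Clock i j) :
    (hIterPt Clock horiz i j k x).1 = tick^[k] x.1 := by
  induction k with
  | zero => rfl
  | succ k ih => rw [Function.iterate_succ_apply', ← ih]; rfl

section Threads

variable {j : ℕ} {g : ∀ i, Clock i j}

lemma thread_val_of_le (hg : ∀ i, vert i j (g (i + 1)) = g i) {i i' n : ℕ} (hii' : i ≤ i')
    (hn : (g i).1 = some n) : (g i').1 = some n := by
  induction hii' with
  | refl => exact hn
  | step _ ih => exact (Option.filter_eq_some_iff.1 ((congrArg Subtype.val (hg _)).trans ih)).1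

lemma thread_val_eq (hg : ∀ i, vert i j (g (i + 1)) = g i) {i i' n n' : ℕ}
    (hn : (g i).1 = some n) (hn' : (g i').1 = some n') : n = n' := by
  rcases le_total i i' with h | h
  · simpa [hn'] using (thread_val_of_le hg h hn).symm
  · simpa [hn] using thread_val_of_le hg h hn'

theorem exists_hIterPt_eq_base (hg : ∀ i, vert i j (g (i + 1)) = g i) :
    ∃ k, ∀ i, hIterPt Clock horiz i j k (g i) = base i (j + k) := by
  by_cases h : ∃ i n, (g i).1 = some n
  · obtain ⟨i₀, n, hn⟩ := h
    refine ⟨n + 1, fun i => Subtype.ext ?_⟩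
    rw [hIterPt_val]
    rcases hm : (g i).1 with _ | m
    · exact tick_iterate_none _
    · rw [thread_val_eq hg hm hn]; exact tick_iterate_some_of_lt n.lt_succ_self
  · push Not at h
    exact ⟨0, fun i => Subtype.ext (Option.eq_none_iff_forall_ne_some.2 (h i))⟩

end Threads

def countdown (j k i : ℕ) : Clock i j :=
  ⟨if k + j ≤ i then some k else none, by split_ifs <;> simp [*]⟩

lemma vert_countdown (j k i : ℕ) : vert i j (countdown j k (i + 1)) = countdown j k i := by
  refine Subtype.ext ?_
  simp only [vert, countdown]
  split_ifs <;> simp <;> omega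

lemma hIterPt_countdown_ne_base (j k : ℕ) :
    hIterPt Clock horiz (k + j) j k (countdown j k (k + j)) ≠ base (k + j) (j + k) := fun h => by
  have hval := congrArg Subtype.val h
  rw [hIterPt_val] at hval
  change tick^[k] (if k + j ≤ k + j then some k else none) = none at hval
  rw [if_pos le_rfl, tick_iterate_self] at hval
  exact Option.some_ne_none _ hval

end CountdownTower

/-- Example: there is a direct sequence of towers of finite pointed sets such that the
colimit of the inverse limits `Γ_j = lim_i G_{ij}` (pointed sets of threads) is
trivial, yet no composite map `Γ_j → Γ_k` (`k ≥ j`) is trivial. -/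
theorem stmt_15 :
    ∃ (G : ℕ → ℕ → Type) (_ : ∀ i j, Finite (G i j)) (pt : ∀ i j, G i j)
      (p : ∀ i j, G (i + 1) j → G i j) (h : ∀ i j, G i j → G i (j + 1)),
      (∀ i j, p i j (pt (i + 1) j) = pt i j) ∧
      (∀ i j, h i j (pt i j) = pt i (j + 1)) ∧
      (∀ i j (g : G (i + 1) j), h i j (p i j g) = p i (j + 1) (h (i + 1) j g)) ∧
      -- the colimit of the `Γ_j = lim_i G_{ij}` is trivial
      (∀ j (g : ∀ i, G i j), (∀ i, p i j (g (i + 1)) = g i) →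
        ∃ k, ∀ i, hIterPt G h i j k (g i) = pt i (j + k)) ∧
      -- but no composite map `Γ_j → Γ_k` is trivial
      (∀ j k, ∃ g : ∀ i, G i j, (∀ i, p i j (g (i + 1)) = g i) ∧
        ¬(∀ i, hIterPt G h i j k (g i) = pt i (j + k))) :=
  ⟨CountdownTower.Clock, CountdownTower.finite_clock, CountdownTower.base,
    CountdownTower.vert, CountdownTower.horiz, fun _ _ => rfl, fun _ _ => rfl,
    CountdownTower.horiz_vert, fun _ _ hg => CountdownTower.exists_hIterPt_eq_base hg,
    fun j k => ⟨CountdownTower.countdown j k, CountdownTower.vert_countdown j k,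
      fun h => CountdownTower.hIterPt_countdown_ne_base j k (h _)⟩⟩
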